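/- arXiv:1312.4769 — 2 statements merged into one kernel-verified Lean document; each statement's English description precedes it below -/
import Mathlib

section
/- A |w|-Hom-configuration has at most |w| isolated vertices with no overarc. -/
/- Combinatorial model of the triangulated category `T_w` generated by a `w`-spherical
object (`w ≤ -1`), via `d`-admissible arcs of the ∞-gon, where `d = w - 1`,
`|d| = 1 - w`, `|w| = -w`. -/

namespace SphericalArcs

/-- An arc is a pair of integers `(t, u)`. -/
abbrev Arc : Type := ℤ × ℤ

/-- `(t,u)` is a `d`-admissible arc: `t > u`, `t - u ≥ |d| - 1 = -w` and
`t - u ≡ -1 (mod |d|)`, i.e. `(1 - w) ∣ (t - u + 1)`. -/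
def Adm (w : ℤ) (a : Arc) : Prop :=
  a.2 < a.1 ∧ -w ≤ a.1 - a.2 ∧ (1 - w) ∣ (a.1 - a.2 + 1)

/-- `k(t,u) = (t - u + 1) / |d|`. -/
def kk (w : ℤ) (a : Arc) : ℤ := (a.1 - a.2 + 1) / (1 - w)

/-- `c ∈ F⁺(a)`: `c = (x,y)` is `d`-admissible, `x = a.1 + i·d` for some
`0 ≤ i ≤ k(a) - 1`, and `y ≤ a.2`. -/
def Fplus (w : ℤ) (a c : Arc) : Prop :=
  Adm w c ∧ (∃ i : ℤ, 0 ≤ i ∧ i ≤ kk w a - 1 ∧ c.1 = a.1 + i * (w - 1)) ∧ c.2 ≤ a.2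

/-- `c ∈ F⁻(a)`: `c = (x,y)` is `d`-admissible, `y = a.2 - i·d` for some
`0 ≤ i ≤ k(a) - 1`, and `x ≥ a.1`. -/
def Fminus (w : ℤ) (a c : Arc) : Prop :=
  Adm w c ∧ (∃ i : ℤ, 0 ≤ i ∧ i ≤ kk w a - 1 ∧ c.2 = a.2 - i * (w - 1)) ∧ a.1 ≤ c.1

/-- The Serre functor: `S(t,u) = (t - w, u - w)`. -/
def Serre (w : ℤ) (a : Arc) : Arc := (a.1 - w, a.2 - w)

/-- `Hom(a,c) ≠ 0` iff `c ∈ F⁺(a) ∪ F⁻(S(a))`. -/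
def HomNe (w : ℤ) (a c : Arc) : Prop := Fplus w a c ∨ Fminus w (Serre w a) c

/-- `Ext^j(a,b) ≠ 0` iff `Hom(a, Σ^j b) ≠ 0`, where `Σ^j b = (b.1 - j, b.2 - j)`. -/
def ExtNe (w : ℤ) (j : ℤ) (a b : Arc) : Prop := HomNe w a (b.1 - j, b.2 - j)

/-- Two arcs `(t,u)` and `(t',u')` cross if `u < u' < t < t'` or `u' < u < t' < t`. -/
def Cross (a b : Arc) : Prop :=
  (a.2 < b.2 ∧ b.2 < a.1 ∧ a.1 < b.1) ∨ (b.2 < a.2 ∧ a.2 < b.1 ∧ b.1 < a.1)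

/-- Two arcs share a vertex if `{t,u} ∩ {t',u'} ≠ ∅`. -/
def ShareVertex (a b : Arc) : Prop :=
  a.1 = b.1 ∨ a.1 = b.2 ∨ a.2 = b.1 ∨ a.2 = b.2

/-- A `|w|`-Hom-configuration: a set `H` of `d`-admissible arcs such that a
`d`-admissible arc `h` belongs to `H` iff `Ext^i(x,h) = 0` for every `x ∈ H` and
`i ∈ {w+1, …, -1}`, and `Ext^i(x,h) = 0` for every `x ∈ H \ {h}` and `i ∈ {0, w}`. -/
def IsHomConfig (w : ℤ) (H : Set Arc) : Prop :=
  (∀ h ∈ H, Adm w h) ∧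
  ∀ h : Arc, Adm w h →
    (h ∈ H ↔
      (∀ x ∈ H, ∀ i : ℤ, w + 1 ≤ i → i ≤ -1 → ¬ ExtNe w i x h) ∧
      (∀ x ∈ H, x ≠ h → ¬ ExtNe w 0 x h ∧ ¬ ExtNe w w x h))

/-- `v` is an isolated vertex of `H`: it is not an endpoint of any arc of `H`. -/
def Isolated (H : Set Arc) (v : ℤ) : Prop := ∀ a ∈ H, a.1 ≠ v ∧ a.2 ≠ v

/-- `a ∈ H` is an overarc of `v`: `a.2 < v < a.1`. -/
def IsOverarc (H : Set Arc) (a : Arc) (v : ℤ) : Prop := a ∈ H ∧ a.2 < v ∧ v < a.1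

/-- `a` is the smallest overarc of `v` in `H`. -/
def IsSmallestOverarc (H : Set Arc) (a : Arc) (v : ℤ) : Prop :=
  IsOverarc H a v ∧ ∀ b : Arc, IsOverarc H b v → b.2 ≤ a.2 ∧ a.1 ≤ b.1

/-- The set of isolated vertices of `H` having no overarc in `H`. -/
def NoOverarcIsolated (H : Set Arc) : Set ℤ :=
  {v | Isolated H v ∧ ∀ a : Arc, ¬ IsOverarc H a v}

/-- A left `|w|`-Riedtmann configuration. -/
def IsLeftRiedtmann (w : ℤ) (C : Set Arc) : Prop :=
  (∀ c ∈ C, Adm w c) ∧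
  (∀ x ∈ C, ∀ y ∈ C, x ≠ y → ∀ i : ℤ, w ≤ i → i ≤ 0 → ¬ ExtNe w i x y) ∧
  ∀ z : Arc, Adm w z → ∃ x ∈ C, ∃ i : ℤ, w + 1 ≤ i ∧ i ≤ 0 ∧ ExtNe w i x z

/-- A right `|w|`-Riedtmann configuration. -/
def IsRightRiedtmann (w : ℤ) (C : Set Arc) : Prop :=
  (∀ c ∈ C, Adm w c) ∧
  (∀ x ∈ C, ∀ y ∈ C, x ≠ y → ∀ i : ℤ, w ≤ i → i ≤ 0 → ¬ ExtNe w i x y) ∧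
  ∀ z : Arc, Adm w z → ∃ x ∈ C, ∃ i : ℤ, w + 1 ≤ i ∧ i ≤ 0 ∧ ExtNe w i z x


/-! The arcs of a Hom-configuration neither cross nor share endpoints: otherwise some
`Ext^i`, `w ≤ i ≤ 0`, between them would be nonzero. Put `m = 1 - w` and let `v < v'` be isolated
vertices without overarc. If no such vertex lies between them, the gap `(v, v')` is tiled by the
outermost arcs of `H` inside it, each with `m ∣ t - u + 1`, so `v' ≡ v + 1 (mod m)`. On the other
hand `v' ≡ v - 1 (mod m)` is impossible: `(v', v)` would then be an admissible arc outside `H`,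
so some arc of `H` has nonzero `Ext` into it, and that arc has to reach over `v` or `v'`.
Among `|w| + 1` consecutive such vertices the first and the last would differ by `|w| ≡ -1`. -/

lemma _root_.Int.nonneg_of_dvd_of_neg_lt {m t : ℤ} (h : m ∣ t) (ht : -m < t) : 0 ≤ t := by
  obtain ⟨c, rfl⟩ := h
  rcases lt_trichotomy c 0 with hc | rfl | hc <;> nlinarith

lemma adm_sub_iff {w i : ℤ} {a : Arc} : Adm w (a.1 - i, a.2 - i) ↔ Adm w a := by
  simp only [Adm, sub_sub_sub_cancel_right, sub_lt_sub_iff_right]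

lemma kk_eq_of_mul_eq {w K : ℤ} (hw : w ≤ -1) {a : Arc} (hK : a.1 - a.2 + 1 = (1 - w) * K) :
    kk w a = K := by
  rw [kk, hK, Int.mul_ediv_cancel_left _ (by omega)]

lemma fplus_iff {w : ℤ} (hw : w ≤ -1) {a : Arc} (ha : Adm w a) (c : Arc) :
    Fplus w a c ↔
      Adm w c ∧ (1 - w) ∣ a.1 - c.1 ∧ a.2 - w ≤ c.1 ∧ c.1 ≤ a.1 ∧ c.2 ≤ a.2 := by
  obtain ⟨K, hK⟩ := ha.2.2
  rw [Fplus, kk_eq_of_mul_eq hw hK]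
  constructor
  · rintro ⟨hc, ⟨i, hi0, hiK, hc1⟩, hc2⟩
    exact ⟨hc, ⟨i, by linarith⟩, by nlinarith, by nlinarith, hc2⟩
  · rintro ⟨hc, ⟨i, hi⟩, h1, h2, hc2⟩
    exact ⟨hc, ⟨i, by nlinarith, by nlinarith, by linarith⟩, hc2⟩

lemma fminus_serre_iff {w : ℤ} (hw : w ≤ -1) {a : Arc} (ha : Adm w a) (c : Arc) :
    Fminus w (Serre w a) c ↔
      Adm w c ∧ (1 - w) ∣ c.2 - (a.2 - w) ∧ a.2 - w ≤ c.2 ∧ c.2 ≤ a.1 ∧ a.1 - w ≤ c.1 := by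
  obtain ⟨K, hK⟩ := ha.2.2
  have hKS : (Serre w a).1 - (Serre w a).2 + 1 = (1 - w) * K := by simp only [Serre]; linarith
  rw [Fminus, kk_eq_of_mul_eq hw hKS]
  simp only [Serre]
  constructor
  · rintro ⟨hc, ⟨i, hi0, hiK, hc2⟩, hc1⟩
    exact ⟨hc, ⟨i, by linarith⟩, by nlinarith, by nlinarith, hc1⟩
  · rintro ⟨hc, ⟨i, hi⟩, h1, h2, hc1⟩
    exact ⟨hc, ⟨i, by nlinarith, by nlinarith, by linarith⟩, hc1⟩

lemma extNe_iff {w : ℤ} (hw : w ≤ -1) {x y : Arc} (hx : Adm w x) (hy : Adm w y) (i : ℤ) :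
    ExtNe w i x y ↔
      ((1 - w) ∣ x.1 - (y.1 - i) ∧ x.2 - w ≤ y.1 - i ∧ y.1 - i ≤ x.1 ∧ y.2 - i ≤ x.2) ∨
      ((1 - w) ∣ y.2 - i - (x.2 - w) ∧ x.2 - w ≤ y.2 - i ∧ y.2 - i ≤ x.1 ∧
        x.1 - w ≤ y.1 - i) := by
  rw [ExtNe, HomNe, fplus_iff hw hx, fminus_serre_iff hw hx]
  simp only [adm_sub_iff, hy, true_and]

lemma extNe_of_snd_eq {w : ℤ} (hw : w ≤ -1) {x y : Arc} (hx : Adm w x) (hy : Adm w y)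
    (h2 : x.2 = y.2) (h1 : x.1 ≤ y.1) : ExtNe w w x y := by
  rw [extNe_iff hw hx hy]
  right
  refine ⟨by rw [h2, sub_self]; exact dvd_zero _, ?_, ?_, ?_⟩ <;> linarith [hx.2.1]

lemma extNe_zero_of_fst_eq {w : ℤ} (hw : w ≤ -1) {x y : Arc} (hx : Adm w x) (hy : Adm w y)
    (h1 : x.1 = y.1) (h2 : y.2 ≤ x.2) : ExtNe w 0 x y := by
  rw [extNe_iff hw hx hy]
  left
  refine ⟨by rw [h1, sub_zero, sub_self]; exact dvd_zero _, ?_, ?_, ?_⟩ <;> linarith [hx.2.1]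

/-- Shifting `y` by the residue of `x.1 - y.2` modulo `1 - w` moves it into `F⁻(S x)`. -/
lemma exists_extNe_of_cross {w : ℤ} (hw : w ≤ -1) {x y : Arc} (hx : Adm w x) (hy : Adm w y)
    (h1 : x.2 < y.2) (h2 : y.2 ≤ x.1) (h3 : x.1 < y.1) :
    ∃ i, w ≤ i ∧ i ≤ 0 ∧ ExtNe w i x y := by
  obtain ⟨K, hK⟩ := hx.2.2
  obtain ⟨L, hL⟩ := hy.2.2
  set p := (x.1 - y.2) % (1 - w)
  have hp0 : 0 ≤ p := Int.emod_nonneg _ (by omega)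
  have hpm : p < 1 - w := Int.emod_lt_of_pos _ (by omega)
  set q := (x.1 - y.2) / (1 - w)
  have hpq : p + (1 - w) * q = x.1 - y.2 := Int.emod_add_mul_ediv _ _
  have hpx : p ≤ x.1 - y.2 := by
    linarith [Int.nonneg_of_dvd_of_neg_lt (dvd_mul_right (1 - w) q) (by linarith)]
  have hbot : (1 - w) ∣ y.2 - -p - (x.2 - w) := ⟨K - 1 - q, by linear_combination hK + hpq⟩
  have htop : (1 - w) ∣ y.1 - -p - (x.1 - w) := ⟨L - 1 - q, by linear_combination hL + hpq⟩
  refine ⟨-p, by omega, by omega, (extNe_iff hw hx hy _).2 (Or.inr ⟨hbot, ?_, by linarith, ?_⟩)⟩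
  · linarith [Int.nonneg_of_dvd_of_neg_lt hbot (by linarith)]
  · linarith [Int.nonneg_of_dvd_of_neg_lt htop (by linarith)]

def NestedOrDisjoint (x y : Arc) : Prop :=
  x.1 < y.2 ∨ y.1 < x.2 ∨ (x.2 < y.2 ∧ y.1 < x.1) ∨ (y.2 < x.2 ∧ x.1 < y.1)

lemma exists_extNe_of_not_nestedOrDisjoint {w : ℤ} (hw : w ≤ -1) {x y : Arc} (hx : Adm w x)
    (hy : Adm w y) (h : ¬ NestedOrDisjoint x y) :
    ∃ i, w ≤ i ∧ i ≤ 0 ∧ (ExtNe w i x y ∨ ExtNe w i y x) := by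
  simp only [NestedOrDisjoint, not_or, not_and, not_lt] at h
  obtain ⟨hyx, hxy, hnest, hnest'⟩ := h
  rcases lt_trichotomy x.2 y.2 with h2 | h2 | h2 <;> rcases lt_trichotomy x.1 y.1 with h1 | h1 | h1
  · obtain ⟨i, hi, hi', he⟩ := exists_extNe_of_cross hw hx hy h2 hyx h1
    exact ⟨i, hi, hi', .inl he⟩
  · exact ⟨0, by omega, le_rfl, .inr (extNe_zero_of_fst_eq hw hy hx h1.symm h2.le)⟩
  · exact absurd (hnest h2) (not_le.2 h1)
  · exact ⟨w, le_rfl, by omega, .inl (extNe_of_snd_eq hw hx hy h2 h1.le)⟩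
  · exact ⟨w, le_rfl, by omega, .inl (extNe_of_snd_eq hw hx hy h2 h1.le)⟩
  · exact ⟨w, le_rfl, by omega, .inr (extNe_of_snd_eq hw hy hx h2.symm h1.le)⟩
  · exact absurd (hnest' h2) (not_le.2 h1)
  · exact ⟨0, by omega, le_rfl, .inl (extNe_zero_of_fst_eq hw hx hy h1 h2.le)⟩
  · obtain ⟨i, hi, hi', he⟩ := exists_extNe_of_cross hw hy hx h2 hxy h1
    exact ⟨i, hi, hi', .inr he⟩

/-- Peel off the unique arc starting at `α` and recurse on what lies to its right. -/
theorem dvd_of_pairwise_nestedOrDisjoint_cover {m β : ℤ} {S : Set Arc}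
    (hS : S.Pairwise NestedOrDisjoint) (hlen : ∀ x ∈ S, x.2 ≤ x.1 ∧ m ∣ x.1 - x.2 + 1)
    (hβ : ∀ x ∈ S, x.1 ≤ β) (α : ℤ) (hαβ : α ≤ β + 1)
    (hcov : ∀ p, α ≤ p → p ≤ β → ∃ x ∈ S, α ≤ x.2 ∧ x.2 ≤ p ∧ p ≤ x.1) :
    m ∣ β + 1 - α := by
  rcases hαβ.eq_or_lt with h | h
  · rw [h, sub_self]
    exact dvd_zero m
  obtain ⟨x, hxS, hαx, hxα, hαx'⟩ := hcov α le_rfl (by omega)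
  have hx := hlen x hxS
  have hrest : m ∣ β + 1 - (x.1 + 1) := by
    refine dvd_of_pairwise_nestedOrDisjoint_cover hS hlen hβ (x.1 + 1) (by linarith [hβ x hxS])
      fun p hp hpβ => ?_
    obtain ⟨y, hyS, hαy, hyp, hpy⟩ := hcov p (by omega) hpβ
    have hxy : x ≠ y := by rintro rfl; omega
    refine ⟨y, hyS, ?_, hyp, hpy⟩
    rcases hS hxS hyS hxy with h | h | h | h <;> omega
  rw [show β + 1 - α = β + 1 - (x.1 + 1) + (x.1 - x.2 + 1) by omega]
  exact dvd_add hrest hx.2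
termination_by (β + 1 - α).toNat
decreasing_by omega

lemma mem_noOverarcIsolated_iff {H : Set Arc} (hH : ∀ a ∈ H, a.2 < a.1) {v : ℤ} :
    v ∈ NoOverarcIsolated H ↔ ∀ a ∈ H, ¬ (a.2 ≤ v ∧ v ≤ a.1) := by
  constructor
  · rintro ⟨hiso, hno⟩ a ha ⟨h2, h1⟩
    have := hiso a ha
    exact hno a ⟨ha, by omega, by omega⟩
  · intro h
    refine ⟨fun a ha => ?_, fun a ⟨ha, h2, h1⟩ => h a ha ⟨h2.le, h1.le⟩⟩
    constructor <;> rintro rfl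
    exacts [h a ha ⟨(hH a ha).le, le_rfl⟩, h a ha ⟨le_rfl, (hH a ha).le⟩]

namespace IsHomConfig

variable {w : ℤ} {H : Set Arc}

lemma not_extNe (hH : IsHomConfig w H) {x y : Arc} (hx : x ∈ H) (hy : y ∈ H) (hxy : x ≠ y)
    {i : ℤ} (hi : w ≤ i) (hi' : i ≤ 0) : ¬ ExtNe w i x y := by
  obtain ⟨hvanish, hvanish'⟩ := (hH.2 y (hH.1 y hy)).1 hy
  obtain hi | rfl | rfl : (w + 1 ≤ i ∧ i ≤ -1) ∨ i = 0 ∨ i = w := by omega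
  exacts [hvanish x hx i hi.1 hi.2, (hvanish' x hx hxy).1, (hvanish' x hx hxy).2]

lemma exists_extNe_of_notMem (hw : w ≤ -1) (hH : IsHomConfig w H) {h : Arc} (hh : Adm w h)
    (hnot : h ∉ H) :
    ∃ x ∈ H, ∃ i, w ≤ i ∧ i ≤ 0 ∧ ExtNe w i x h := by
  by_contra! hc
  refine hnot ((hH.2 h hh).2 ⟨fun x hx i hi hi' => hc x hx i (by omega) (by omega),
    fun x hx _ => ⟨hc x hx 0 (by omega) le_rfl, hc x hx w le_rfl (by omega)⟩⟩)

lemma pairwise_nestedOrDisjoint (hw : w ≤ -1) (hH : IsHomConfig w H) :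
    H.Pairwise NestedOrDisjoint := by
  intro x hx y hy hxy
  by_contra h
  obtain ⟨i, hi, hi', he | he⟩ :=
    exists_extNe_of_not_nestedOrDisjoint hw (hH.1 x hx) (hH.1 y hy) h
  exacts [hH.not_extNe hx hy hxy hi hi' he, hH.not_extNe hy hx hxy.symm hi hi' he]

lemma not_dvd_sub_add_one (hw : w ≤ -1) (hH : IsHomConfig w H) {v v' : ℤ}
    (hv : v ∈ NoOverarcIsolated H) (hv' : v' ∈ NoOverarcIsolated H) (hlt : v < v') :
    ¬ (1 - w) ∣ v' - v + 1 := by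
  intro hdvd
  have harc (a : Arc) (ha : a ∈ H) : a.2 < a.1 := (hH.1 a ha).1
  have hvv' : Adm w (v', v) :=
    ⟨hlt, by linarith [Int.le_of_dvd (by omega) hdvd], hdvd⟩
  have hnot : ((v', v) : Arc) ∉ H := fun h =>
    (mem_noOverarcIsolated_iff harc).1 hv _ h ⟨le_rfl, hlt.le⟩
  obtain ⟨x, hx, i, hi, hi', he⟩ := hH.exists_extNe_of_notMem hw hvv' hnot
  have h := (mem_noOverarcIsolated_iff harc).1 hv x hx
  have h' := (mem_noOverarcIsolated_iff harc).1 hv' x hx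
  rcases (extNe_iff hw (hH.1 x hx) hvv' i).1 he with ⟨-, he⟩ | ⟨-, he⟩ <;> simp only at he <;>
    omega

lemma dvd_sub_sub_one (hw : w ≤ -1) (hH : IsHomConfig w H) {v v' : ℤ}
    (hv : v ∈ NoOverarcIsolated H) (hv' : v' ∈ NoOverarcIsolated H) (hlt : v < v')
    (hadj : ∀ u ∈ NoOverarcIsolated H, ¬ (v < u ∧ u < v')) :
    (1 - w) ∣ v' - v - 1 := by
  have harc (a : Arc) (ha : a ∈ H) : a.2 < a.1 := (hH.1 a ha).1
  have key := dvd_of_pairwise_nestedOrDisjoint_cover (m := 1 - w) (β := v' - 1)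
    (S := {x | x ∈ H ∧ v < x.2 ∧ x.1 < v'})
    ((hH.pairwise_nestedOrDisjoint hw).mono fun x hx => hx.1)
    (fun x hx => ⟨(hH.1 x hx.1).1.le, (hH.1 x hx.1).2.2⟩) (fun x hx => by linarith [hx.2.2])
    (v + 1) (by omega) fun p hp hpβ => ?_
  · rwa [show v' - 1 + 1 - (v + 1) = v' - v - 1 by ring] at key
  · have hp : p ∉ NoOverarcIsolated H := fun h => hadj p h ⟨by omega, by omega⟩
    simp only [mem_noOverarcIsolated_iff harc, not_forall, not_not] at hp
    obtain ⟨a, ha, ha2, ha1⟩ := hp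
    have h := (mem_noOverarcIsolated_iff harc).1 hv a ha
    have h' := (mem_noOverarcIsolated_iff harc).1 hv' a ha
    exact ⟨a, ⟨ha, by omega, by omega⟩, by omega, ha2, ha1⟩

end IsHomConfig

section Gaps

variable {V : Set ℤ} {n : ℕ}

/-- Enumerating `V ∩ [min T, max T]` increasingly as `v₀ < v₁ < ⋯`, `hadj` gives
`vⱼ ≡ v₀ + j` modulo `n + 1`, so `vₙ - v₀ + 1 ≡ 0` contradicts `hgap`. -/
lemma card_le_of_gaps (hn : 0 < n)
    (hadj : ∀ v ∈ V, ∀ v' ∈ V, v < v' → (∀ u ∈ V, ¬ (v < u ∧ u < v')) →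
      ((n : ℤ) + 1) ∣ v' - v - 1)
    (hgap : ∀ v ∈ V, ∀ v' ∈ V, v < v' → ¬ ((n : ℤ) + 1) ∣ v' - v + 1)
    (T : Finset ℤ) (hT : ↑T ⊆ V) : T.card ≤ n := by
  classical
  by_contra! hcard
  have hne : T.Nonempty := Finset.card_pos.1 (by omega)
  set F := (Finset.Icc (T.min' hne) (T.max' hne)).filter (· ∈ V)
  have hTF : T ⊆ F := fun t ht => Finset.mem_filter.2
    ⟨Finset.mem_Icc.2 ⟨T.min'_le t ht, T.le_max' t ht⟩, hT ht⟩
  have hF : n < F.card := hcard.trans_le (Finset.card_le_card hTF)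
  set f := F.orderEmbOfFin rfl
  have hfF (j : Fin F.card) : f j ∈ F := F.orderEmbOfFin_mem rfl j
  have hfV (j : Fin F.card) : f j ∈ V := (Finset.mem_filter.1 (hfF j)).2
  have hconsec (j : ℕ) (hj : j + 1 < F.card) :
      ((n : ℤ) + 1) ∣ f ⟨j + 1, hj⟩ - f ⟨j, by omega⟩ - 1 := by
    refine hadj _ (hfV _) _ (hfV _) (f.strictMono (Fin.mk_lt_mk.2 (by omega)))
      fun u hu ⟨hlo, hhi⟩ => ?_
    have huF : u ∈ F := by
      have hlo' := Finset.mem_Icc.1 (Finset.mem_filter.1 (hfF ⟨j, by omega⟩)).1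
      have hhi' := Finset.mem_Icc.1 (Finset.mem_filter.1 (hfF ⟨j + 1, hj⟩)).1
      exact Finset.mem_filter.2 ⟨Finset.mem_Icc.2 ⟨by omega, by omega⟩, hu⟩
    obtain ⟨k, rfl⟩ : u ∈ Set.range f := by rwa [Finset.range_orderEmbOfFin]
    have h1 := f.strictMono.lt_iff_lt.1 hlo
    have h2 := f.strictMono.lt_iff_lt.1 hhi
    simp only [Fin.lt_def] at h1 h2
    omega
  have hchain (j : ℕ) (hj : j < F.card) :
      ((n : ℤ) + 1) ∣ f ⟨j, hj⟩ - f ⟨0, by omega⟩ - j := by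
    induction j with
    | zero => simp
    | succ j ih =>
      refine (dvd_add (ih (by omega)) (hconsec j hj)).trans (dvd_of_eq ?_)
      push_cast
      ring
  refine hgap _ (hfV ⟨0, by omega⟩) _ (hfV ⟨n, hF⟩) (f.strictMono (Fin.mk_lt_mk.2 (by omega))) ?_
  exact (dvd_add (hchain n hF) dvd_rfl).trans (dvd_of_eq (by ring))

lemma finite_and_ncard_le_of_gaps (hn : 0 < n)
    (hadj : ∀ v ∈ V, ∀ v' ∈ V, v < v' → (∀ u ∈ V, ¬ (v < u ∧ u < v')) →
      ((n : ℤ) + 1) ∣ v' - v - 1)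
    (hgap : ∀ v ∈ V, ∀ v' ∈ V, v < v' → ¬ ((n : ℤ) + 1) ∣ v' - v + 1) :
    V.Finite ∧ V.ncard ≤ n := by
  have hfin : V.Finite := by
    by_contra hinf
    obtain ⟨T, hTV, hTcard⟩ := Set.Infinite.exists_subset_card_eq hinf (n + 1)
    have := card_le_of_gaps hn hadj hgap T hTV
    omega
  refine ⟨hfin, ?_⟩
  rw [Set.ncard_eq_toFinset_card V hfin]
  exact card_le_of_gaps hn hadj hgap _ (by simp)

end Gaps

/-- Lemma 3.3: a `|w|`-Hom-configuration has at most `|w|` isolated vertices with no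
overarc. -/
theorem stmt4 (w : ℤ) (hw : w ≤ -1) (H : Set Arc) (hH : IsHomConfig w H) :
    (NoOverarcIsolated H).Finite ∧ ((NoOverarcIsolated H).ncard : ℤ) ≤ -w := by
  obtain ⟨n, hn⟩ : ∃ n : ℕ, -w = n := ⟨(-w).toNat, by omega⟩
  have hm : 1 - w = (n : ℤ) + 1 := by omega
  obtain ⟨hfin, hcard⟩ := finite_and_ncard_le_of_gaps (V := NoOverarcIsolated H) (by omega)
    (fun v hv v' hv' hlt hadj => hm ▸ hH.dvd_sub_sub_one hw hv hv' hlt hadj)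
    (fun v hv v' hv' hlt => hm ▸ hH.not_dvd_sub_add_one hw hv hv' hlt)
  exact ⟨hfin, by rw [hn]; exact_mod_cast hcard⟩

end SphericalArcs
end

section
/- Let H be a |w|-Hom-configuration. Then H is a right |w|-Riedtmann configuration if and only if there are at most |w| − 1 isolated vertices with no overarc. -/
/- Combinatorial model of the triangulated category `T_w` generated by a `w`-spherical
object (`w ≤ -1`), via `d`-admissible arcs of the ∞-gon, where `d = w - 1`,
`|d| = 1 - w`, `|w| = -w`. -/

namespace SphericalArcs

/-!
The arcs of a Hom-configuration neither cross nor share an endpoint, and `Ext^i(z, x) ≠ 0` for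
some `w + 1 ≤ i ≤ 0` is an explicit condition `ExtPattern` on the relative position of `z` and `x`.
The counting tool: scanning `(a, b]` from a vertex under no arc, a hole adds `1` and an arc is
jumped over at a cost divisible by `1 - w`, so the holes in `(a, b]` number `≡ b - a (mod 1 - w)`.

If there are `|w|` holes, the first and last of `|w|` consecutive ones, `h` and `h'`, give the
admissible arc `(h', h - 1)`, which has no such `Ext` towards `H`. Conversely, an admissible `z`
without such `Ext` has at least `|w|` holes of `H` under it; or, if some arc of `H` lies over `z`,
the innermost one contains `1 - w` consecutive holes of the arcs not over `z`, which span an arc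
that maximality of `H` forces into `H`, a contradiction.
-/

open Finset

lemma nonneg_of_dvd_of_neg_lt {N X : ℤ} (hN : 0 < N) (h : N ∣ X) (hX : -N < X) : 0 ≤ X := by
  obtain ⟨k, rfl⟩ := h
  by_contra hneg
  have hk : k ≤ -1 := by by_contra; nlinarith
  nlinarith

lemma exists_dvd_sub_of_not_dvd_sub_one {N c : ℤ} (hN : 0 < N) (h : ¬ N ∣ c - 1) :
    ∃ i, 2 - N ≤ i ∧ i ≤ 0 ∧ N ∣ c - i := by
  have hpos : (c - 1) % N ≠ 0 := fun h0 => h (Int.dvd_of_emod_eq_zero h0)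
  have := Int.emod_nonneg (c - 1) hN.ne'
  have := Int.emod_lt_of_pos (c - 1) hN
  refine ⟨(c - 1) % N + 1 - N, by omega, by omega, ⟨(c - 1) / N + 1, ?_⟩⟩
  linear_combination (Int.mul_ediv_add_emod (c - 1) N).symm

lemma exists_eq_mul_iff {N k D : ℤ} (hN : 0 < N) :
    (∃ i, 0 ≤ i ∧ i ≤ k - 1 ∧ D = i * N) ↔ 0 ≤ D ∧ D ≤ (k - 1) * N ∧ N ∣ D := by
  constructor
  · rintro ⟨i, hi₀, hik, rfl⟩
    exact ⟨mul_nonneg hi₀ hN.le, mul_le_mul_of_nonneg_right hik hN.le, dvd_mul_left N i⟩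
  · rintro ⟨hD₀, hDk, i, rfl⟩
    refine ⟨i, ?_, ?_, mul_comm N i⟩
    · exact nonneg_of_mul_nonneg_right hD₀ hN
    · nlinarith

lemma _root_.Finset.exists_mem_card_filter_le_eq {α : Type*} [LinearOrder α] (s : Finset α)
    {m : ℕ} (hm : 0 < m) (hms : m ≤ #s) : ∃ v ∈ s, #{x ∈ s | x ≤ v} = m := by
  induction s using Finset.induction_on_max with
  | empty => simp at hms; omega
  | insert a s hlt ih =>
    have has : a ∉ s := fun h => lt_irrefl a (hlt a h)
    rw [card_insert_of_notMem has] at hms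
    rcases Nat.lt_or_ge #s m with hsm | hsm
    · refine ⟨a, mem_insert_self a s, ?_⟩
      rw [filter_true_of_mem fun x hx => ?_, card_insert_of_notMem has]
      · omega
      · rcases mem_insert.1 hx with rfl | hx
        exacts [le_rfl, (hlt x hx).le]
    · obtain ⟨v, hv, hcard⟩ := ih hsm
      refine ⟨v, mem_insert_of_mem hv, ?_⟩
      rw [filter_insert, if_neg (not_le.2 (hlt v hv)), hcard]

lemma _root_.Set.exists_finset_subset_card_gt {α : Type*} {S : Set α} {k : ℕ}
    (h : ¬ (S.Finite ∧ S.ncard ≤ k)) : ∃ T : Finset α, ↑T ⊆ S ∧ k < #T := by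
  by_cases hfin : S.Finite
  · refine ⟨hfin.toFinset, by simp, ?_⟩
    rw [← Set.ncard_eq_toFinset_card _ hfin]
    exact not_le.1 (h ⟨hfin, ·⟩)
  · obtain ⟨T, hT, hcard⟩ := Set.Infinite.exists_subset_card_eq hfin (k + 1)
    exact ⟨T, hT, by omega⟩

section

variable {w : ℤ} {R R' H : Set Arc}

lemma Adm.shift {a : Arc} (ha : Adm w a) (j : ℤ) : Adm w (a.1 - j, a.2 - j) := by
  obtain ⟨h₁, h₂, h₃⟩ := ha
  exact ⟨by simp only; omega, by simp only; omega, by simpa using h₃⟩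

lemma adm_of_dvd {t u : ℤ} (hw : w ≤ -1) (hut : u ≤ t) (h : (1 - w) ∣ t - u + 1) :
    Adm w (t, u) := by
  have := Int.le_of_dvd (by omega) h
  exact ⟨by simp only; omega, by simp only; omega, h⟩

lemma homNe_iff (hw : w ≤ -1) {a : Arc} (ha : Adm w a) (c : Arc) :
    HomNe w a c ↔ Adm w c ∧
      ((a.2 - w ≤ c.1 ∧ c.1 ≤ a.1 ∧ (1 - w) ∣ a.1 - c.1 ∧ c.2 ≤ a.2) ∨
       (a.2 - w ≤ c.2 ∧ c.2 ≤ a.1 ∧ (1 - w) ∣ c.2 - a.2 + w ∧ a.1 - w ≤ c.1)) := by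
  have hk : (kk w a - 1) * (1 - w) = a.1 - a.2 + w := by
    rw [sub_mul, kk, Int.ediv_mul_cancel ha.2.2]; ring
  have hrange := fun D => exists_eq_mul_iff (k := kk w a) (D := D) (by omega : (0 : ℤ) < 1 - w)
  simp only [hk] at hrange
  have hF : ∀ x, (∃ i, 0 ≤ i ∧ i ≤ kk w a - 1 ∧ x = a.1 + i * (w - 1)) ↔
      ∃ i, 0 ≤ i ∧ i ≤ kk w a - 1 ∧ a.1 - x = i * (1 - w) :=
    fun x => exists_congr fun i => and_congr_right' <| and_congr_right' <| by
      constructor <;> intro h <;> linear_combination -h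
  have hG : ∀ y, (∃ i, 0 ≤ i ∧ i ≤ kk w (Serre w a) - 1 ∧ y = (Serre w a).2 - i * (w - 1)) ↔
      ∃ i, 0 ≤ i ∧ i ≤ kk w a - 1 ∧ y - a.2 + w = i * (1 - w) := by
    have hkS : kk w (Serre w a) = kk w a := by simp only [kk, Serre]; ring_nf
    refine fun y => hkS ▸ exists_congr fun i => and_congr_right' <| and_congr_right' ?_
    constructor <;> intro h <;> simp only [Serre] at h ⊢ <;> linear_combination h
  simp only [HomNe, Fplus, Fminus, hF, hG, hrange]
  simp only [Serre]
  constructor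
  · rintro (⟨hc, ⟨h₁, h₂, h₃⟩, h₄⟩ | ⟨hc, ⟨h₁, h₂, h₃⟩, h₄⟩)
    · exact ⟨hc, Or.inl ⟨by omega, by omega, h₃, h₄⟩⟩
    · exact ⟨hc, Or.inr ⟨by omega, by omega, h₃, h₄⟩⟩
  · rintro ⟨hc, ⟨h₁, h₂, h₃, h₄⟩ | ⟨h₁, h₂, h₃, h₄⟩⟩
    · exact Or.inl ⟨hc, ⟨by omega, by omega, h₃⟩, h₄⟩
    · exact Or.inr ⟨hc, ⟨by omega, by omega, h₃⟩, h₄⟩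

lemma extNe_iff_s8 (hw : w ≤ -1) {a b : Arc} (ha : Adm w a) (hb : Adm w b) (i : ℤ) :
    ExtNe w i a b ↔
      (a.2 - w ≤ b.1 - i ∧ b.1 - i ≤ a.1 ∧ (1 - w) ∣ a.1 - (b.1 - i) ∧ b.2 - i ≤ a.2) ∨
      (a.2 - w ≤ b.2 - i ∧ b.2 - i ≤ a.1 ∧ (1 - w) ∣ b.2 - i - a.2 + w ∧ a.1 - w ≤ b.1 - i) := by
  rw [ExtNe, homNe_iff hw ha, and_iff_right (hb.shift i)]

/-- The positions of `x` relative to `z` for which `Ext^i(z, x) ≠ 0` for some `w + 1 ≤ i ≤ 0`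
(`exists_extNe_iff_extPattern`). -/
def ExtPattern (w : ℤ) (z x : Arc) : Prop :=
  x = z ∨
  (x.2 < z.2 ∧ z.2 < x.1 ∧ x.1 < z.1 ∧ ¬ (1 - w) ∣ z.2 - x.2 + 1) ∨
  (z.2 < x.2 ∧ x.2 < z.1 ∧ z.1 < x.1 ∧ ¬ (1 - w) ∣ x.2 - z.2) ∨
  x.2 = z.1 ∨
  (x.2 = z.2 ∧ x.1 < z.1) ∨
  (x.1 = z.1 ∧ x.2 < z.2)

lemma extPattern_of_extNe (hw : w ≤ -1) {z x : Arc} (hz : Adm w z) (hx : Adm w x) {i : ℤ}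
    (hi₁ : w + 1 ≤ i) (hi₂ : i ≤ 0) (h : ExtNe w i z x) : ExtPattern w z x := by
  have hext := (extNe_iff_s8 hw hz hx i).1 h
  obtain ⟨p, q⟩ := z
  obtain ⟨s, r⟩ := x
  obtain ⟨-, -, hpq⟩ := hz
  obtain ⟨-, -, hsr⟩ := hx
  simp only [ExtPattern, Prod.mk.injEq] at hext hpq hsr ⊢
  rcases hext with ⟨h₁, h₂, h₃, h₄⟩ | ⟨h₁, h₂, h₃, h₄⟩
  · have hD : ¬ (1 - w) ∣ q - r + 1 := fun hD => by
      have : (1 - w) ∣ i - 1 := by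
        convert Int.dvd_add (Int.dvd_sub (Int.dvd_sub hsr hD) hpq) h₃ using 1
        ring
      have := nonneg_of_dvd_of_neg_lt (by omega) this (by omega)
      omega
    grind
  · have hD : ¬ (1 - w) ∣ r - q := fun hD => by
      have : (1 - w) ∣ i - w := by convert Int.dvd_sub hD h₃ using 1; ring
      have := Int.le_of_dvd (by omega) this
      omega
    grind

lemma exists_extNe_of_extPattern (hw : w ≤ -1) {z x : Arc} (hz : Adm w z) (hx : Adm w x)
    (h : ExtPattern w z x) : ∃ i, w + 1 ≤ i ∧ i ≤ 0 ∧ ExtNe w i z x := by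
  have hN : (0 : ℤ) < 1 - w := by omega
  have hext := fun i => extNe_iff_s8 hw hz hx i
  obtain ⟨p, q⟩ := z
  obtain ⟨s, r⟩ := x
  obtain ⟨-, hqp, hpq⟩ := hz
  obtain ⟨-, hrs, hsr⟩ := hx
  simp only [ExtPattern, Prod.mk.injEq] at hext hpq hsr hqp hrs h
  rcases h with ⟨rfl, rfl⟩ | ⟨h₁, h₂, h₃, hD⟩ | ⟨h₁, h₂, h₃, hD⟩ | rfl | ⟨rfl, h⟩ | ⟨rfl, h⟩
  · exact ⟨0, by omega, le_rfl, (hext 0).2 (Or.inl ⟨by omega, by omega, by simp, by omega⟩)⟩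
  · obtain ⟨i, hi₁, hi₂, hi⟩ := exists_dvd_sub_of_not_dvd_sub_one (c := r - q) hN
      (fun h' => hD (by convert Int.dvd_neg.2 h' using 1; ring))
    have hps : (1 - w) ∣ p - (s - i) := by
      convert Int.dvd_sub (Int.dvd_sub hpq hsr) hi using 1; ring
    have hsq : (1 - w) ∣ s - i - q + 1 := by convert Int.dvd_sub hpq hps using 1; ring
    refine ⟨i, by omega, hi₂, (hext i).2 (Or.inl ⟨?_, ?_, hps, ?_⟩)⟩
    · have := Int.le_of_dvd (by omega) hsq; omega
    · have := nonneg_of_dvd_of_neg_lt hN hps (by omega); omega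
    · have := nonneg_of_dvd_of_neg_lt hN (Int.dvd_neg.2 hi) (by omega); omega
  · obtain ⟨i, hi₁, hi₂, hi⟩ := exists_dvd_sub_of_not_dvd_sub_one (c := r - q + w) hN
      (fun h' => hD (by convert Int.dvd_add h' (dvd_refl _) using 1; ring))
    have hpr : (1 - w) ∣ p - r + i := by
      convert Int.dvd_sub (Int.dvd_sub hpq (dvd_refl _)) hi using 1; ring
    have hsp : (1 - w) ∣ s - p + w - i := by
      convert Int.dvd_add (Int.dvd_sub hsr hpq) hi using 1; ring
    have hri : (1 - w) ∣ r - i - q + w := by convert hi using 1; ring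
    refine ⟨i, by omega, hi₂, (hext i).2 (Or.inr ⟨?_, ?_, hri, ?_⟩)⟩
    · have := nonneg_of_dvd_of_neg_lt hN hri (by omega); omega
    · have := nonneg_of_dvd_of_neg_lt hN hpr (by omega); omega
    · have := nonneg_of_dvd_of_neg_lt hN hsp (by omega); omega
  · refine ⟨0, by omega, le_rfl, (hext 0).2 (Or.inr ⟨by omega, by omega, ?_, by omega⟩)⟩
    convert Int.dvd_sub hpq (dvd_refl _) using 1; ring
  · refine ⟨0, by omega, le_rfl, (hext 0).2 (Or.inl ⟨by omega, by omega, ?_, by omega⟩)⟩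
    convert Int.dvd_sub hpq hsr using 1; ring
  · exact ⟨0, by omega, le_rfl, (hext 0).2 (Or.inl ⟨by omega, by omega, by simp, by omega⟩)⟩

lemma exists_extNe_iff_extPattern (hw : w ≤ -1) {z x : Arc} (hz : Adm w z) (hx : Adm w x) :
    (∃ i, w + 1 ≤ i ∧ i ≤ 0 ∧ ExtNe w i z x) ↔ ExtPattern w z x :=
  ⟨fun ⟨_, hi₁, hi₂, h⟩ => extPattern_of_extNe hw hz hx hi₁ hi₂ h,
    exists_extNe_of_extPattern hw hz hx⟩

lemma cross_or_shareVertex_of_extNe (hw : w ≤ -1) {a b : Arc} (ha : Adm w a) (hb : Adm w b)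
    {i : ℤ} (hi₁ : w ≤ i) (hi₂ : i ≤ 0) (h : ExtNe w i a b) : Cross a b ∨ ShareVertex a b := by
  rcases (extNe_iff_s8 hw ha hb i).1 h with ⟨h₁, h₂, -, h₄⟩ | ⟨h₁, h₂, -, h₄⟩ <;>
    · simp only [Cross, ShareVertex]; omega

lemma not_extNe_self (hw : w ≤ -1) {a : Arc} (ha : Adm w a) {i : ℤ} (hi₁ : w + 1 ≤ i)
    (hi₂ : i ≤ -1) : ¬ ExtNe w i a a := by
  rw [extNe_iff_s8 hw ha ha]
  omega

lemma extPattern_or_extPattern (hw : w ≤ -1) {x y : Arc} (hne : x ≠ y)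
    (h : Cross x y ∨ ShareVertex x y) : ExtPattern w x y ∨ ExtPattern w y x := by
  have hcons : ∀ d, ¬ ((1 - w) ∣ d + 1 ∧ (1 - w) ∣ d) := fun d ⟨h₁, h₂⟩ => by
    have := Int.le_of_dvd one_pos (by convert Int.dvd_sub h₁ h₂ using 1; ring)
    omega
  have := hcons (y.2 - x.2)
  have := hcons (x.2 - y.2)
  obtain ⟨x₁, x₂⟩ := x
  obtain ⟨y₁, y₂⟩ := y
  simp only [ExtPattern, Cross, ShareVertex, Prod.mk.injEq, ne_eq] at *
  grind

def IsNoncrossing (w : ℤ) (R : Set Arc) : Prop :=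
  (∀ x ∈ R, Adm w x) ∧ ∀ x ∈ R, ∀ y ∈ R, x ≠ y → ¬ Cross x y ∧ ¬ ShareVertex x y

lemma IsNoncrossing.mono (hR : IsNoncrossing w R) (h : R' ⊆ R) : IsNoncrossing w R' :=
  ⟨fun x hx => hR.1 x (h hx), fun x hx y hy => hR.2 x (h hx) y (h hy)⟩

lemma IsNoncrossing.disjoint_or_nested (hR : IsNoncrossing w R) {x y : Arc} (hx : x ∈ R)
    (hy : y ∈ R) (hne : x ≠ y) :
    x.1 < y.2 ∨ y.1 < x.2 ∨ (x.2 < y.2 ∧ y.1 < x.1) ∨ (y.2 < x.2 ∧ x.1 < y.1) := by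
  have := hR.2 x hx y hy hne
  have := (hR.1 x hx).1
  have := (hR.1 y hy).1
  simp only [Cross, ShareVertex] at *
  omega

lemma IsNoncrossing.mem_noOverarcIsolated_iff (hR : IsNoncrossing w R) {v : ℤ} :
    v ∈ NoOverarcIsolated R ↔ ∀ x ∈ R, v < x.2 ∨ x.1 < v := by
  refine ⟨fun ⟨hiso, hover⟩ x hx => ?_, fun h => ⟨fun x hx => ?_, fun x ⟨hx, h₁, h₂⟩ => ?_⟩⟩
  · have := hiso x hx
    have := hover x
    have := (hR.1 x hx).1
    simp only [IsOverarc] at *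
    grind
  all_goals have := h x hx; have := (hR.1 x hx).1; omega

/-- No arc of `R` passes over the unit segment `[v, v + 1]`. -/
def Uncovered (R : Set Arc) (v : ℤ) : Prop := ∀ x ∈ R, v < x.2 ∨ x.1 ≤ v

lemma IsNoncrossing.uncovered_of_mem (hR : IsNoncrossing w R) {v : ℤ}
    (hv : v ∈ NoOverarcIsolated R) : Uncovered R v := fun x hx => by
  have := hR.mem_noOverarcIsolated_iff.1 hv x hx
  omega

lemma IsNoncrossing.uncovered_fst (hR : IsNoncrossing w R) {y : Arc} (hy : y ∈ R)
    (h : Uncovered R (y.2 - 1)) : Uncovered R y.1 := by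
  intro x hx
  by_cases hxy : x = y
  · subst hxy; omega
  have := hR.disjoint_or_nested hx hy hxy
  have := h x hx
  have := (hR.1 y hy).1
  omega

open Classical in
/-- The holes of `R` in `(a, b]`, a hole being an isolated vertex without overarc. -/
noncomputable def holesIn (R : Set Arc) (a b : ℤ) : Finset ℤ :=
  {v ∈ Finset.Ioc a b | v ∈ NoOverarcIsolated R}

lemma mem_holesIn {a b v : ℤ} :
    v ∈ holesIn R a b ↔ (a < v ∧ v ≤ b) ∧ v ∈ NoOverarcIsolated R := by
  simp [holesIn]

lemma card_holesIn_add {a b c : ℤ} (hab : a ≤ b) (hbc : b ≤ c) :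
    #(holesIn R a c) = #(holesIn R a b) + #(holesIn R b c) := by
  classical
  rw [← card_union_of_disjoint]
  · congr 1
    ext v
    simp only [Finset.mem_union, mem_holesIn]
    grind
  · exact Finset.disjoint_left.2 fun v h₁ h₂ => by
      rw [mem_holesIn] at h₁ h₂
      omega

lemma card_holesIn_eq_zero {a b : ℤ} (h : ∀ v, a < v → v ≤ b → v ∉ NoOverarcIsolated R) :
    #(holesIn R a b) = 0 :=
  Finset.card_eq_zero.2 <| Finset.eq_empty_of_forall_notMem fun v hv => by
    rw [mem_holesIn] at hv
    exact h v hv.1.1 hv.1.2 hv.2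

lemma card_holesIn_succ {a : ℤ} (h : a + 1 ∈ NoOverarcIsolated R) :
    #(holesIn R a (a + 1)) = 1 :=
  Finset.card_eq_one.2 ⟨a + 1, Finset.ext fun v => by
    rw [mem_holesIn, Finset.mem_singleton]
    constructor
    · intro hv; omega
    · rintro rfl; exact ⟨by omega, h⟩⟩

/-- Walking right from `a`, a hole adds one to both `b - a` and the count, while an arc that
starts at `a + 1` is jumped over, advancing `a` by its length `t - u + 1 ≡ 0 (mod 1 - w)`. -/
theorem IsNoncrossing.dvd_sub_card_holesIn (hR : IsNoncrossing w R) {a b : ℤ} (hab : a ≤ b)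
    (ha : Uncovered R a)
    (hb : ∀ y ∈ R, a < y.2 → y.2 ≤ b → b < y.1 → (1 - w) ∣ b - y.2 + 1) :
    (1 - w) ∣ b - a - #(holesIn R a b) := by
  induction hn : (b - a).toNat using Nat.strong_induction_on generalizing a with
  | _ n ih =>
  rcases hab.eq_or_lt with rfl | hab
  · simp [holesIn]
  by_cases hhole : a + 1 ∈ NoOverarcIsolated R
  · have := ih _ (by omega) (a := a + 1) (by omega) (hR.uncovered_of_mem hhole)
      (fun y hy h₁ => hb y hy (by omega)) rfl
    rw [card_holesIn_add (by omega : a ≤ a + 1) (by omega : a + 1 ≤ b), card_holesIn_succ hhole]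
    convert this using 1
    push_cast
    ring
  obtain ⟨y, hy, hy₂⟩ : ∃ y ∈ R, y.2 = a + 1 := by
    rw [hR.mem_noOverarcIsolated_iff] at hhole
    push Not at hhole
    obtain ⟨y, hy, h₁, h₂⟩ := hhole
    have := ha y hy
    exact ⟨y, hy, by omega⟩
  have hy₁ := (hR.1 y hy).1
  have hcov : ∀ v, a < v → v ≤ y.1 → v ∉ NoOverarcIsolated R := fun v h₁ h₂ hv => by
    have := hR.mem_noOverarcIsolated_iff.1 hv y hy
    omega
  rcases le_or_gt y.1 b with hyb | hyb
  · have := ih _ (by omega) (a := y.1) hyb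
      (hR.uncovered_fst hy (by rwa [hy₂, add_sub_cancel_right]))
      (fun y' hy' h₁ => hb y' hy' (by omega)) rfl
    rw [card_holesIn_add (by omega : a ≤ y.1) hyb, card_holesIn_eq_zero hcov]
    convert Int.dvd_add this (hR.1 y hy).2.2 using 1
    push_cast
    omega
  · rw [card_holesIn_eq_zero fun v h₁ h₂ => hcov v h₁ (by omega)]
    convert hb y hy (by omega) (by omega) hyb using 1
    push_cast
    omega

/-- The scan of `(z.2, z.1]` starts at `z.2`, or past the outermost arc over `z.2`. -/
lemma IsNoncrossing.exists_uncovered_start (hR : IsNoncrossing w R) (hz : Adm w z)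
    (hfree : ∀ x ∈ R, ¬ ExtPattern w z x) (hnest : ∀ x ∈ R, ¬ (x.2 ≤ z.2 ∧ z.1 ≤ x.1)) :
    ∃ v, z.2 ≤ v ∧ v ≤ z.1 ∧ Uncovered R v ∧ (1 - w) ∣ v - z.2 ∧ #(holesIn R z.2 v) = 0 := by
  have hfree' := fun x hx => hfree x hx
  simp only [ExtPattern, not_or, not_and, not_not] at hfree'
  by_cases hcov : ∃ x ∈ R, x.2 < z.2 ∧ z.2 < x.1
  · have hbdd : ∀ x ∈ R, x.2 < z.2 → z.2 < x.1 → x.1 < z.1 := fun x hx h₁ h₂ => by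
      obtain ⟨-, -, -, -, -, hend⟩ := hfree' x hx
      have := hnest x hx
      grind
    obtain ⟨t, ⟨y, hy, hy₂, hy₁, rfl⟩, hmax⟩ := Int.exists_greatest_of_bdd
      (P := fun t => ∃ x ∈ R, x.2 < z.2 ∧ z.2 < x.1 ∧ x.1 = t)
      ⟨z.1, fun t ⟨x, hx, h₁, h₂, ht⟩ => ht ▸ (hbdd x hx h₁ h₂).le⟩
      (by obtain ⟨x, hx, h₁, h₂⟩ := hcov; exact ⟨x.1, x, hx, h₁, h₂, rfl⟩)
    have hyz := hbdd y hy hy₂ hy₁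
    refine ⟨y.1, hy₁.le, hyz.le, fun x hx => ?_, ?_, card_holesIn_eq_zero fun v h₁ h₂ hv => ?_⟩
    · by_cases hxy : x = y
      · subst hxy; omega
      have := hR.disjoint_or_nested hx hy hxy
      by_cases hx₂ : x.2 < z.2
      · by_cases hx₁ : z.2 < x.1
        · have := hmax x.1 ⟨x, hx, hx₂, hx₁, rfl⟩
          omega
        · omega
      · omega
    · obtain ⟨-, hcross, -⟩ := hfree' y hy
      convert Int.dvd_sub (hR.1 y hy).2.2 (hcross hy₂ hy₁ hyz) using 1
      ring
    · have := hR.mem_noOverarcIsolated_iff.1 hv y hy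
      omega
  · push Not at hcov
    refine ⟨z.2, le_rfl, hz.1.le, fun x hx => ?_, by simp,
      card_holesIn_eq_zero fun v h₁ h₂ => by omega⟩
    obtain ⟨-, -, -, -, hbot, -⟩ := hfree' x hx
    have := hcov x hx
    have := hnest x hx
    have := (hR.1 x hx).1
    grind

lemma IsNoncrossing.neg_le_card_holesIn (hR : IsNoncrossing w R) (hz : Adm w z)
    (hfree : ∀ x ∈ R, ¬ ExtPattern w z x) (hnest : ∀ x ∈ R, ¬ (x.2 ≤ z.2 ∧ z.1 ≤ x.1)) :
    -w ≤ #(holesIn R z.2 z.1) := by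
  obtain ⟨v, hv₁, hv₂, hv, hdvd, hzero⟩ := hR.exists_uncovered_start hz hfree hnest
  have htrav := hR.dvd_sub_card_holesIn hv₂ hv fun y hy h₁ h₂ h₃ => by
    have hy := hfree y hy
    simp only [ExtPattern, not_or, not_and, not_not] at hy
    obtain ⟨-, -, hcross, htop, -⟩ := hy
    convert Int.dvd_sub hz.2.2 (hcross (by omega) (by omega) h₃) using 1
    ring
  rw [card_holesIn_add hv₁ hv₂, hzero, zero_add]
  have hcard : (1 - w) ∣ #(holesIn R v z.1) + 1 := by
    convert Int.dvd_sub (Int.dvd_sub hz.2.2 htrav) hdvd using 1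
    ring
  have := Int.le_of_dvd (by positivity) hcard
  omega

lemma IsNoncrossing.exists_dvd_of_le_card_holesIn (hR : IsNoncrossing w R) {a b : ℤ} {m : ℕ}
    (hm : 0 < m) (hmc : m ≤ #(holesIn R a b)) :
    ∃ h h', h ∈ NoOverarcIsolated R ∧ h' ∈ NoOverarcIsolated R ∧ a < h ∧ h ≤ h' ∧ h' ≤ b ∧
      (1 - w) ∣ h' - h + 1 - m := by
  have hne : (holesIn R a b).Nonempty := card_pos.1 (by omega)
  set h := (holesIn R a b).min' hne
  obtain ⟨h', hh', hcard⟩ := (holesIn R a b).exists_mem_card_filter_le_eq hm hmc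
  have hle : h ≤ h' := min'_le _ _ hh'
  have hh := min'_mem (holesIn R a b) hne
  have hsplit : holesIn R h h' = {x ∈ holesIn R a b | x ≤ h'}.erase h := by
    ext v
    have := min'_le (holesIn R a b) v
    simp only [mem_erase, mem_filter, mem_holesIn] at this hh hh' ⊢
    grind
  rw [mem_holesIn] at hh hh'
  have htrav := hR.dvd_sub_card_holesIn hle (hR.uncovered_of_mem hh.2) fun y hy h₁ h₂ h₃ => by
    have := hR.mem_noOverarcIsolated_iff.1 hh'.2 y hy
    omega
  rw [hsplit, card_erase_of_mem (mem_filter.2 ⟨min'_mem _ hne, hle⟩), hcard] at htrav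
  refine ⟨h, h', hh.2, hh'.2, hh.1.1, hle, hh'.1.2, ?_⟩
  convert htrav using 1
  push_cast [Nat.cast_sub hm]
  ring

lemma IsHomConfig.not_extNe_s8 (hH : IsHomConfig w H) {x y : Arc} (hx : x ∈ H) (hy : y ∈ H)
    (hne : x ≠ y) {i : ℤ} (hi₁ : w ≤ i) (hi₂ : i ≤ 0) : ¬ ExtNe w i x y := by
  obtain ⟨hmid, hends⟩ := (hH.2 y (hH.1 y hy)).1 hy
  rcases eq_or_ne i w with rfl | hiw
  · exact (hends x hx hne).2
  rcases eq_or_ne i 0 with rfl | hi0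
  · exact (hends x hx hne).1
  exact hmid x hx i (by omega) (by omega)

lemma IsHomConfig.isNoncrossing (hw : w ≤ -1) (hH : IsHomConfig w H) : IsNoncrossing w H := by
  refine ⟨hH.1, fun x hx y hy hne => not_or.1 fun hxy => ?_⟩
  rcases extPattern_or_extPattern hw hne hxy with h | h
  · obtain ⟨i, hi₁, hi₂, hi⟩ := exists_extNe_of_extPattern hw (hH.1 x hx) (hH.1 y hy) h
    exact hH.not_extNe_s8 hx hy hne (by omega) hi₂ hi
  · obtain ⟨i, hi₁, hi₂, hi⟩ := exists_extNe_of_extPattern hw (hH.1 y hy) (hH.1 x hx) h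
    exact hH.not_extNe_s8 hy hx hne.symm (by omega) hi₂ hi

lemma IsHomConfig.mem_of_forall_not_cross (hw : w ≤ -1) (hH : IsHomConfig w H) {z : Arc}
    (hz : Adm w z) (h : ∀ x ∈ H, x ≠ z → ¬ Cross x z ∧ ¬ ShareVertex x z) : z ∈ H := by
  have hvan : ∀ x ∈ H, x ≠ z → ∀ i, w ≤ i → i ≤ 0 → ¬ ExtNe w i x z :=
    fun x hx hne i hi₁ hi₂ hi => (cross_or_shareVertex_of_extNe hw (hH.1 x hx) hz hi₁ hi₂ hi).elim
      (h x hx hne).1 (h x hx hne).2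
  refine (hH.2 z hz).2 ⟨fun x hx i hi₁ hi₂ => ?_, fun x hx hne =>
    ⟨hvan x hx hne 0 (by omega) le_rfl, hvan x hx hne w le_rfl (by omega)⟩⟩
  rcases eq_or_ne x z with rfl | hne
  · exact not_extNe_self hw hz hi₁ hi₂
  · exact hvan x hx hne i (by omega) (by omega)

/-- From `|w|` holes `h ≤ … ≤ h'` in a row, `(h', h - 1)` is admissible, and a hole at each end
rules out every pattern. -/
lemma IsNoncrossing.exists_adm_forall_not_extPattern (hw : w ≤ -1) (hR : IsNoncrossing w R)
    {T : Finset ℤ} (hT : ↑T ⊆ NoOverarcIsolated R) (hcard : -w ≤ #T) :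
    ∃ z, Adm w z ∧ ∀ x ∈ R, ¬ ExtPattern w z x := by
  have hne : T.Nonempty := card_pos.1 (by omega)
  have hsub : T ⊆ holesIn R (T.min' hne - 1) (T.max' hne) := fun v hv =>
    mem_holesIn.2 ⟨⟨by have := T.min'_le v hv; omega, T.le_max' v hv⟩, hT hv⟩
  have hmc : (-w).toNat ≤ #(holesIn R (T.min' hne - 1) (T.max' hne)) := by
    have := card_le_card hsub
    omega
  obtain ⟨h, h', hh, hh', -, hle, -, hdvd⟩ := hR.exists_dvd_of_le_card_holesIn (by omega) hmc
  rw [Int.toNat_of_nonneg (by omega)] at hdvd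
  refine ⟨(h', h - 1), adm_of_dvd hw (by omega) ?_, fun x hx hpat => ?_⟩
  · convert Int.dvd_add hdvd (dvd_refl (1 - w)) using 1
    ring
  have := hR.mem_noOverarcIsolated_iff.1 hh x hx
  have := hR.mem_noOverarcIsolated_iff.1 hh' x hx
  have := (hR.1 x hx).1
  simp only [ExtPattern, Prod.ext_iff] at hpat
  omega

lemma IsNoncrossing.exists_innermost (hR : IsNoncrossing w R) {z : Arc} (hz : z.2 < z.1)
    (hover : ∃ x ∈ R, x.2 ≤ z.2 ∧ z.1 ≤ x.1) :
    ∃ xs ∈ R, xs.2 ≤ z.2 ∧ z.1 ≤ xs.1 ∧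
      ∀ y ∈ R, y.2 ≤ z.2 → z.1 ≤ y.1 → y.2 ≤ xs.2 ∧ xs.1 ≤ y.1 := by
  obtain ⟨t, ⟨xs, hxs, hxs₂, hxs₁, rfl⟩, hleast⟩ := Int.exists_least_of_bdd
    (P := fun t => ∃ x ∈ R, x.2 ≤ z.2 ∧ z.1 ≤ x.1 ∧ x.1 = t)
    ⟨z.1, fun t ⟨x, _, _, h, ht⟩ => ht ▸ h⟩
    (by obtain ⟨x, hx, h₁, h₂⟩ := hover; exact ⟨_, x, hx, h₁, h₂, rfl⟩)
  refine ⟨xs, hxs, hxs₂, hxs₁, fun y hy h₁ h₂ => ?_⟩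
  have := hleast y.1 ⟨y, hy, h₁, h₂, rfl⟩
  rcases eq_or_ne y xs with rfl | hne
  · omega
  · have := hR.disjoint_or_nested hy hxs hne
    omega

/-- Under `xs` the holes number `≡ -2 (mod 1 - w)`, so `-w` of them force `1 - w`. -/
lemma IsNoncrossing.one_sub_le_card_holesIn (hw : w ≤ -1) (hR : IsNoncrossing w R) {xs : Arc}
    (hxs : Adm w xs) (havoid : ∀ x ∈ R, x.1 < xs.2 ∨ xs.1 < x.2 ∨ (xs.2 < x.2 ∧ x.1 < xs.1))
    (hcard : -w ≤ #(holesIn R xs.2 (xs.1 - 1))) : 1 - w ≤ #(holesIn R xs.2 (xs.1 - 1)) := by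
  have := hxs.1
  have htrav := hR.dvd_sub_card_holesIn (a := xs.2) (b := xs.1 - 1) (by omega)
    (fun x hx => by have := havoid x hx; omega)
    (fun y hy h₁ h₂ h₃ => by have := havoid y hy; have := (hR.1 y hy).1; omega)
  by_contra hfew
  have h2 : (1 - w) ∣ (1 - w) + 1 := by
    convert Int.dvd_sub hxs.2.2 htrav using 1
    omega
  have := Int.le_of_dvd one_pos ((Int.dvd_add_right (dvd_refl _)).1 h2)
  omega

/-- By maximality `(h', h)` would be an arc of `H`; it cannot be one of `R`, whose holes are its
endpoints, nor one of the others, which pass over `h`. -/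
lemma IsHomConfig.not_adm_of_mem_noOverarcIsolated (hw : w ≤ -1) (hH : IsHomConfig w H)
    (hRH : R ⊆ H) {h h' : ℤ} (hh : h ∈ NoOverarcIsolated R) (hh' : h' ∈ NoOverarcIsolated R)
    (hle : h ≤ h') (hout : ∀ x ∈ H, x ∉ R → x.2 < h ∧ h' < x.1) : ¬ Adm w (h', h) := by
  have hR := (hH.isNoncrossing hw).mono hRH
  intro hadm
  have hmem := hH.mem_of_forall_not_cross hw hadm fun x hx _ => by
    have := (hH.1 x hx).1
    simp only [Cross, ShareVertex]
    by_cases hxR : x ∈ R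
    · have := hR.mem_noOverarcIsolated_iff.1 hh x hxR
      have := hR.mem_noOverarcIsolated_iff.1 hh' x hxR
      omega
    · have := hout x hx hxR
      omega
  by_cases hR' : (h', h) ∈ R
  · have := hR.mem_noOverarcIsolated_iff.1 hh' _ hR'
    simp only at this
    omega
  · have := hout _ hmem hR'
    simp only at this
    omega

lemma IsHomConfig.exists_extPattern_of_exists_over (hw : w ≤ -1) (hH : IsHomConfig w H)
    {z : Arc} (hz : Adm w z) (hover : ∃ x ∈ H, x.2 ≤ z.2 ∧ z.1 ≤ x.1) :
    ∃ x ∈ H, ExtPattern w z x := by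
  by_contra! hfree
  have hH' := hH.isNoncrossing hw
  obtain ⟨xs, hxs, hxs₂, hxs₁, hinner⟩ := hH'.exists_innermost hz.1 hover
  have hzxs : z.1 < xs.1 := by
    have := hfree xs hxs
    simp only [ExtPattern, Prod.ext_iff, not_or] at this
    omega
  set R := {x ∈ H | ¬ (x.2 ≤ z.2 ∧ z.1 ≤ x.1)}
  have hR : IsNoncrossing w R := hH'.mono (Set.sep_subset H _)
  have hunder : -w ≤ #(holesIn R z.2 z.1) :=
    hR.neg_le_card_holesIn hz (fun x hx => hfree x hx.1) (fun x hx => hx.2)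
  have hsub := card_le_card fun v (hv : v ∈ holesIn R z.2 z.1) =>
    show v ∈ holesIn R xs.2 (xs.1 - 1) by
      rw [mem_holesIn] at hv ⊢
      exact ⟨⟨by omega, by omega⟩, hv.2⟩
  have hmany := hR.one_sub_le_card_holesIn hw (hH.1 xs hxs)
    (fun x hx => by
      have := hH'.disjoint_or_nested hx.1 hxs fun h => hx.2 (h ▸ ⟨hxs₂, hxs₁⟩)
      have := hx.2
      omega)
    (hunder.trans (by exact_mod_cast hsub))
  obtain ⟨h, h', hh, hh', h₁, hle, h₂, hdvd⟩ := hR.exists_dvd_of_le_card_holesIn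
    (a := xs.2) (b := xs.1 - 1) (m := (1 - w).toNat) (by omega) (by omega)
  rw [Int.toNat_of_nonneg (by omega)] at hdvd
  have hlen : (1 - w) ∣ h' - h + 1 := by
    convert Int.dvd_add hdvd (dvd_refl (1 - w)) using 1
    ring
  refine hH.not_adm_of_mem_noOverarcIsolated hw (Set.sep_subset H _) hh hh' hle
    (fun x hx hxR => ?_) (adm_of_dvd hw hle hlen)
  simp only [Set.mem_sep_iff, hx, true_and, not_not] at hxR
  have := hinner x hx hxR.1 hxR.2
  omega

lemma IsHomConfig.exists_extPattern (hw : w ≤ -1) (hH : IsHomConfig w H)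
    (hfin : (NoOverarcIsolated H).Finite) (hcard : ((NoOverarcIsolated H).ncard : ℤ) ≤ -w - 1)
    {z : Arc} (hz : Adm w z) : ∃ x ∈ H, ExtPattern w z x := by
  by_cases hover : ∃ x ∈ H, x.2 ≤ z.2 ∧ z.1 ≤ x.1
  · exact hH.exists_extPattern_of_exists_over hw hz hover
  by_contra! hfree
  have hunder := (hH.isNoncrossing hw).neg_le_card_holesIn hz hfree fun x hx h => hover ⟨x, hx, h⟩
  have : #(holesIn H z.2 z.1) ≤ (NoOverarcIsolated H).ncard := by
    rw [← Set.ncard_coe_finset]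
    exact Set.ncard_le_ncard (fun v hv => (mem_holesIn.1 hv).2) hfin
  omega

end

/-- Theorem 4.3 ((2) ⇔ (3)): a `|w|`-Hom-configuration `H` is a right `|w|`-Riedtmann
configuration iff there are at most `|w| - 1` isolated vertices with no overarc. -/
theorem stmt8 (w : ℤ) (hw : w ≤ -1) (H : Set Arc) (hH : IsHomConfig w H) :
    IsRightRiedtmann w H ↔
      ((NoOverarcIsolated H).Finite ∧ ((NoOverarcIsolated H).ncard : ℤ) ≤ -w - 1) := by
  refine ⟨fun hRied => ?_, fun ⟨hfin, hcard⟩ => ?_⟩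
  · by_contra hmany
    obtain ⟨T, hT, hTcard⟩ := Set.exists_finset_subset_card_gt (k := (-w - 1).toNat)
      fun ⟨hfin, hk⟩ => hmany ⟨hfin, by omega⟩
    obtain ⟨z, hz, hfree⟩ :=
      (hH.isNoncrossing hw).exists_adm_forall_not_extPattern hw hT (by omega)
    obtain ⟨x, hx, hext⟩ := hRied.2.2 z hz
    exact hfree x hx ((exists_extNe_iff_extPattern hw hz (hH.1 x hx)).1 hext)
  · refine ⟨hH.1, fun x hx y hy hne i hi₁ hi₂ => hH.not_extNe_s8 hx hy hne hi₁ hi₂, fun z hz => ?_⟩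
    obtain ⟨x, hx, hpat⟩ := hH.exists_extPattern hw hfin hcard hz
    exact ⟨x, hx, (exists_extNe_iff_extPattern hw hz (hH.1 x hx)).2 hpat⟩

end SphericalArcs
end
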